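/- arXiv:2011.02724 — 4 statements merged into one kernel-verified Lean document; each statement's English description precedes it below -/
import Mathlib

section
/- Let F_q be a finite field, F = (F_1, …, F_r) a flag of type (t_1, …, t_r) on F_q^n, and T a subgroup of GL(n, q). The following are equivalent: (a) |Orb_T(F)| = |Orb_T(F_i)| for every i = 1, …, r (i.e., the orbit flag code Orb_T(F) is disjoint); (b) Stab_T(F) = Stab_T(F_1) = ⋯ = Stab_T(F_r); (c) Stab_T(F_1) = ⋯ = Stab_T(F_r). -/
open Module

/-- The action of `A ∈ GL(n, F)` on subspaces of `F^n`: `U · A` is the image of `U`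
under the invertible linear map given by the matrix `A`. -/
noncomputable def mapGL {F : Type*} [Field F] {n : ℕ}
    (A : GL (Fin n) F) (U : Submodule F (Fin n → F)) : Submodule F (Fin n → F) :=
  U.map (Matrix.toLin' (A : Matrix (Fin n) (Fin n) F))

lemma mapGL_one {F : Type*} [Field F] {n : ℕ} (U : Submodule F (Fin n → F)) :
    mapGL 1 U = U := by
  simp [mapGL, Matrix.toLin'_one, Submodule.map_id]

lemma mapGL_mul {F : Type*} [Field F] {n : ℕ} (A B : GL (Fin n) F)
    (U : Submodule F (Fin n → F)) :
    mapGL (A * B) U = mapGL A (mapGL B U) := by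
  simp only [mapGL, Units.val_mul, Matrix.toLin'_mul, Submodule.map_comp]

lemma mapGL_inv_cancel {F : Type*} [Field F] {n : ℕ} (A : GL (Fin n) F)
    (U : Submodule F (Fin n → F)) :
    mapGL A⁻¹ (mapGL A U) = U := by
  rw [← mapGL_mul, inv_mul_cancel, mapGL_one]

/-- For a flag `F = (F_1, …, F_r)` of type `(t_1, …, t_r)` on `F_q^n` and a
subgroup `T ≤ GL(n, q)`, the following are equivalent:
(a) `|Orb_T(F)| = |Orb_T(F_i)|` for every `i` (the orbit flag code is disjoint);
(b) `Stab_T(F) = Stab_T(F_i)` for every `i`;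
(c) all the stabilizers `Stab_T(F_i)` coincide. -/
theorem orbit_flag_code_disjoint_iff
    {F : Type*} [Field F] [Fintype F] {n r : ℕ} (hr : 0 < r)
    (t : Fin r → ℕ) (ht : StrictMono t)
    (ht0 : 0 < t ⟨0, hr⟩) (htn : ∀ i, t i < n)
    (Fl : Fin r → Submodule F (Fin n → F))
    (hdim : ∀ i, finrank F (Fl i) = t i)
    (hmono : StrictMono Fl)
    (T : Subgroup (GL (Fin n) F)) :
    ((∀ i : Fin r,
        {G : Fin r → Submodule F (Fin n → F) | ∃ A ∈ T, G = fun j => mapGL A (Fl j)}.ncard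
          = {U : Submodule F (Fin n → F) | ∃ A ∈ T, U = mapGL A (Fl i)}.ncard)
      ↔ (∀ i : Fin r,
        {A : GL (Fin n) F | A ∈ T ∧ ∀ j, mapGL A (Fl j) = Fl j}
          = {A : GL (Fin n) F | A ∈ T ∧ mapGL A (Fl i) = Fl i}))
    ∧ ((∀ i : Fin r,
        {A : GL (Fin n) F | A ∈ T ∧ ∀ j, mapGL A (Fl j) = Fl j}
          = {A : GL (Fin n) F | A ∈ T ∧ mapGL A (Fl i) = Fl i})
      ↔ (∀ i i' : Fin r,
        {A : GL (Fin n) F | A ∈ T ∧ mapGL A (Fl i) = Fl i}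
          = {A : GL (Fin n) F | A ∈ T ∧ mapGL A (Fl i') = Fl i'})) := by
  set OrbF : Set (Fin r → Submodule F (Fin n → F)) :=
    {G | ∃ A ∈ T, G = fun j => mapGL A (Fl j)} with hOrbF
  -- OrbF is finite
  have hfin : OrbF.Finite := by
    apply Set.Finite.subset (Set.finite_range
      (fun A : GL (Fin n) F => fun j => mapGL A (Fl j)))
    rintro G ⟨A, -, rfl⟩
    exact ⟨A, rfl⟩
  -- the orbit of F_i is the image of OrbF under evaluation at i
  have himg : ∀ i : Fin r,
      {U : Submodule F (Fin n → F) | ∃ A ∈ T, U = mapGL A (Fl i)}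
        = (fun G : Fin r → Submodule F (Fin n → F) => G i) '' OrbF := by
    intro i
    ext U
    constructor
    · rintro ⟨A, hA, rfl⟩
      exact ⟨fun j => mapGL A (Fl j), ⟨A, hA, rfl⟩, rfl⟩
    · rintro ⟨G, ⟨A, hA, rfl⟩, rfl⟩
      exact ⟨A, hA, rfl⟩
  -- the key equivalence for each i
  have key : ∀ i : Fin r,
      (OrbF.ncard = {U : Submodule F (Fin n → F) | ∃ A ∈ T, U = mapGL A (Fl i)}.ncard
        ↔ {A : GL (Fin n) F | A ∈ T ∧ ∀ j, mapGL A (Fl j) = Fl j}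
            = {A : GL (Fin n) F | A ∈ T ∧ mapGL A (Fl i) = Fl i}) := by
    intro i
    rw [himg i]
    constructor
    · intro hcard
      have hinj : Set.InjOn (fun G : Fin r → Submodule F (Fin n → F) => G i) OrbF :=
        Set.injOn_of_ncard_image_eq hcard.symm hfin
      ext A
      simp only [Set.mem_setOf_eq]
      refine ⟨fun h => ⟨h.1, h.2 i⟩, fun h => ⟨h.1, fun j => ?_⟩⟩
      have h1 : (fun j => mapGL A (Fl j)) ∈ OrbF := ⟨A, h.1, rfl⟩
      have h2 : Fl ∈ OrbF := ⟨1, one_mem T, by funext j; rw [mapGL_one]⟩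
      have := hinj h1 h2 h.2
      exact congrFun this j
    · intro hstab
      refine (Set.ncard_image_of_injOn ?_).symm
      rintro G ⟨A, hA, rfl⟩ G' ⟨B, hB, rfl⟩ hGi
      simp only at hGi
      have hC : (B⁻¹ * A : GL (Fin n) F) ∈ T := mul_mem (inv_mem hB) hA
      have hfix : mapGL (B⁻¹ * A) (Fl i) = Fl i := by
        rw [mapGL_mul, hGi, mapGL_inv_cancel]
      have hmem : (B⁻¹ * A : GL (Fin n) F) ∈
          {A : GL (Fin n) F | A ∈ T ∧ mapGL A (Fl i) = Fl i} := ⟨hC, hfix⟩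
      rw [← hstab] at hmem
      funext j
      have : mapGL (B⁻¹ * A) (Fl j) = Fl j := hmem.2 j
      rw [mapGL_mul] at this
      calc mapGL A (Fl j) = mapGL B (mapGL B⁻¹ (mapGL A (Fl j))) := by
            rw [← mapGL_mul, mul_inv_cancel, mapGL_one]
        _ = mapGL B (Fl j) := by rw [this]
  constructor
  · exact forall_congr' key
  · constructor
    · intro h i i'
      rw [← h i, h i']
    · intro h i
      ext A
      simp only [Set.mem_setOf_eq]
      refine ⟨fun hA => ⟨hA.1, hA.2 i⟩, fun hA => ⟨hA.1, fun j => ?_⟩⟩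
      have : A ∈ {A : GL (Fin n) F | A ∈ T ∧ mapGL A (Fl j) = Fl j} := by
        rw [h j i]; exact hA
      exact this.2
end

section
/- Let F_q be a finite field, k a positive integer, F = (F_1, …, F_{2k−1}) a full flag on F_q^{2k}, and T a subgroup of GL(2k, q). Suppose the orbit Orb_T(F_k) has maximum distance, i.e., any two distinct subspaces in Orb_T(F_k) intersect trivially. Then Stab_T(F_i) ⊆ Stab_T(F_k) for every i ∈ {1, …, 2k−1}. -/
open Module

lemma mapGL_mono {F : Type*} [Field F] {n : ℕ} (A : GL (Fin n) F)
    {U V : Submodule F (Fin n → F)} (h : U ≤ V) : mapGL A U ≤ mapGL A V :=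
  Submodule.map_mono h

lemma mapGL_finrank {F : Type*} [Field F] {n : ℕ} (A : GL (Fin n) F)
    (U : Submodule F (Fin n → F)) : finrank F (mapGL A U) = finrank F U := by
  let e := Matrix.toLin'OfInv (M := (A⁻¹ : GL (Fin n) F).val) (M' := A.val)
    (by rw [← Units.val_mul, inv_mul_cancel]; rfl)
    (by rw [← Units.val_mul, mul_inv_cancel]; rfl)
  have he : (e : (Fin n → F) →ₗ[F] (Fin n → F)) = Matrix.toLin' (A : Matrix (Fin n) (Fin n) F) := by
    rfl
  rw [mapGL, ← he, LinearEquiv.finrank_map_eq]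


/-- Let `F = (F_1, …, F_{2k−1})` be a full flag on `F_q^{2k}` and `T` a
subgroup of `GL(2k, q)` such that the orbit `Orb_T(F_k)` has maximum distance (any two
distinct subspaces in it intersect trivially). Then `Stab_T(F_i) ⊆ Stab_T(F_k)` for every
`i ∈ {1, …, 2k−1}`. -/
theorem stabilizer_subset_stabilizer_middle
    {F : Type*} [Field F] [Fintype F] {k : ℕ} (hk : 0 < k)
    (Fl : ℕ → Submodule F (Fin (2 * k) → F))
    (hdim : ∀ i, 1 ≤ i → i ≤ 2 * k - 1 → finrank F (Fl i) = i)
    (hmono : ∀ i j, 1 ≤ i → i < j → j ≤ 2 * k - 1 → Fl i < Fl j)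
    (T : Subgroup (GL (Fin (2 * k)) F))
    (hmax : ∀ A ∈ T, ∀ B ∈ T,
      mapGL A (Fl k) ≠ mapGL B (Fl k) → mapGL A (Fl k) ⊓ mapGL B (Fl k) = ⊥) :
    ∀ i, 1 ≤ i → i ≤ 2 * k - 1 →
      ∀ A ∈ T, mapGL A (Fl i) = Fl i → mapGL A (Fl k) = Fl k := by
  intro i h1 h2 A hA hfix
  have hk2 : k ≤ 2 * k - 1 := by omega
  by_contra hne
  have hbot := hmax A hA 1 T.one_mem (by rwa [mapGL_one])
  rw [mapGL_one] at hbot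
  have hle : ∀ a b, 1 ≤ a → a ≤ b → b ≤ 2 * k - 1 → Fl a ≤ Fl b := by
    intro a b ha hab hb
    rcases eq_or_lt_of_le hab with rfl | h
    · exact le_rfl
    · exact (hmono a b ha h hb).le
  rcases le_or_gt i k with hik | hki
  · -- F_i ≤ F_k, so F_i ≤ inf = ⊥, contradiction with dim F_i = i ≥ 1
    have h1le : Fl i ≤ Fl k := hle i k h1 hik hk2
    have : Fl i ≤ mapGL A (Fl k) ⊓ Fl k := by
      refine le_inf ?_ h1le
      calc Fl i = mapGL A (Fl i) := hfix.symm
        _ ≤ mapGL A (Fl k) := mapGL_mono A h1le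
    rw [hbot, le_bot_iff] at this
    have hdi := hdim i h1 h2
    rw [this, finrank_bot] at hdi
    omega
  · -- k < i : sup ≤ F_i, dimension count
    have hkle : Fl k ≤ Fl i := hle k i hk hki.le h2
    have hsup : mapGL A (Fl k) ⊔ Fl k ≤ Fl i :=
      sup_le (hfix ▸ mapGL_mono A hkle) hkle
    have hd1 : finrank F (mapGL A (Fl k) ⊔ Fl k : Submodule F (Fin (2*k) → F)) ≤ i := by
      rw [← hdim i h1 h2]
      exact Submodule.finrank_mono hsup
    have hd2 := Submodule.finrank_sup_add_finrank_inf_eq (mapGL A (Fl k)) (Fl k)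
    rw [hbot, finrank_bot, mapGL_finrank, hdim k hk hk2] at hd2
    omega
end

section
/- Let L be a finite field and let Ḡ be the subgroup of GL(2, L) generated by the matrix S₀ = [[0,1],[1,0]] together with all matrices [[1,b],[0,1]] with b ∈ L, b ≠ 0. Then the special linear group SL(2, L) = {A ∈ GL(2, L) : det A = 1} is a subgroup of Ḡ; moreover, if char(L) = 2, then Ḡ = SL(2, L). -/
/-- The permutation matrix `S₀ = [[0,1],[1,0]]` as an element of `GL(2, L)`. -/
def swapGL (L : Type*) [Field L] : GL (Fin 2) L :=
  ⟨!![0, 1; 1, 0], !![0, 1; 1, 0],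
    by simp [Matrix.mul_fin_two, Matrix.one_fin_two],
    by simp [Matrix.mul_fin_two, Matrix.one_fin_two]⟩

/-- The transvection `[[1,b],[0,1]]` as an element of `GL(2, L)`. -/
def transvGL {L : Type*} [Field L] (b : L) : GL (Fin 2) L :=
  ⟨!![1, b; 0, 1], !![1, -b; 0, 1],
    by simp [Matrix.mul_fin_two, Matrix.one_fin_two],
    by simp [Matrix.mul_fin_two, Matrix.one_fin_two]⟩

/-- The subgroup `Ḡ ≤ GL(2, L)` generated by `S₀` and the transvections `[[1,b],[0,1]]`,
`b ≠ 0`. -/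
def Gbar (L : Type*) [Field L] : Subgroup (GL (Fin 2) L) :=
  Subgroup.closure ({swapGL L} ∪ {A | ∃ b : L, b ≠ 0 ∧ A = transvGL b})

/-- The special linear group `SL(2, L) = {A ∈ GL(2, L) : det A = 1}`, as a subgroup of
`GL(2, L)`. -/
def SL2 (L : Type*) [Field L] : Subgroup (GL (Fin 2) L) where
  carrier := {A | Matrix.det (A : Matrix (Fin 2) (Fin 2) L) = 1}
  one_mem' := by simp
  mul_mem' := by
    intro a b ha hb
    simp only [Set.mem_setOf_eq, Units.val_mul, Matrix.det_mul] at *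
    rw [ha, hb, one_mul]
  inv_mem' := by
    intro A hA
    simp only [Set.mem_setOf_eq] at *
    have h : Matrix.det ((A⁻¹ : GL (Fin 2) L) : Matrix (Fin 2) (Fin 2) L)
        * Matrix.det ((A : GL (Fin 2) L) : Matrix (Fin 2) (Fin 2) L) = 1 := by
      rw [← Matrix.det_mul, ← Units.val_mul, inv_mul_cancel A, Units.val_one, Matrix.det_one]
    rw [hA, mul_one] at h
    exact h

/-!
An `SL₂` matrix `[[a, b], [c, d]]` with `c ≠ 0` factors as
`T((a - 1)/c) · S₀ · T(c) · S₀ · T((d - 1)/c)`, where `T(x) = [[1, x], [0, 1]]`. If `c = 0`,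
multiplying on the right by the lower transvection `S₀ T(1) S₀ = [[1, 0], [1, 1]]` makes the
lower-left entry `d ≠ 0`. Conversely, every generator of `Ḡ` has determinant `±1`, and `-1 = 1`
in characteristic `2`.
-/

section

variable {L : Type*} [Field L]

theorem mem_SL2 {A : GL (Fin 2) L} : A ∈ SL2 L ↔ (A : Matrix (Fin 2) (Fin 2) L).det = 1 :=
  Iff.rfl

@[simp]
theorem transvGL_zero : transvGL (0 : L) = 1 := by
  ext i j
  fin_cases i <;> fin_cases j <;> simp [transvGL]

theorem transvGL_mem_Gbar (b : L) : transvGL b ∈ Gbar L := by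
  rcases eq_or_ne b 0 with rfl | hb
  · simp [(Gbar L).one_mem]
  · exact Subgroup.subset_closure (Or.inr ⟨b, hb, rfl⟩)

theorem swapGL_mem_Gbar : swapGL L ∈ Gbar L :=
  Subgroup.subset_closure (Or.inl rfl)

theorem eq_transvGL_mul_swapGL_of_det_eq_one {A : GL (Fin 2) L}
    (hdet : (A : Matrix (Fin 2) (Fin 2) L).det = 1)
    (hc : (A : Matrix (Fin 2) (Fin 2) L) 1 0 ≠ 0) :
    A = transvGL ((A 0 0 - 1) / A 1 0) * swapGL L * transvGL (A 1 0) * swapGL L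
      * transvGL ((A 1 1 - 1) / A 1 0) := by
  rw [Matrix.det_fin_two] at hdet
  ext i j
  fin_cases i <;> fin_cases j <;>
    simp [transvGL, swapGL, hc, mul_div_cancel₀]
  field_simp
  linear_combination -hdet

theorem det_swapGL : (swapGL L : Matrix (Fin 2) (Fin 2) L).det = -1 := by
  simp [swapGL, Matrix.det_fin_two]

theorem det_transvGL (b : L) : (transvGL b : Matrix (Fin 2) (Fin 2) L).det = 1 := by
  simp [transvGL, Matrix.det_fin_two]

theorem mem_Gbar_of_det_eq_one_of_ne_zero {A : GL (Fin 2) L}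
    (hdet : (A : Matrix (Fin 2) (Fin 2) L).det = 1)
    (hc : (A : Matrix (Fin 2) (Fin 2) L) 1 0 ≠ 0) : A ∈ Gbar L := by
  rw [eq_transvGL_mul_swapGL_of_det_eq_one hdet hc]
  exact mul_mem (mul_mem (mul_mem (mul_mem (transvGL_mem_Gbar _) swapGL_mem_Gbar)
    (transvGL_mem_Gbar _)) swapGL_mem_Gbar) (transvGL_mem_Gbar _)

theorem coe_swapGL_mul_transvGL_one_mul_swapGL :
    ((swapGL L * transvGL 1 * swapGL L : GL (Fin 2) L) : Matrix (Fin 2) (Fin 2) L) =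
      !![1, 0; 1, 1] := by
  simp [swapGL, transvGL]

theorem mem_Gbar_of_det_eq_one {A : GL (Fin 2) L}
    (hdet : (A : Matrix (Fin 2) (Fin 2) L).det = 1) : A ∈ Gbar L := by
  obtain hc | hc := ne_or_eq ((A : Matrix (Fin 2) (Fin 2) L) 1 0) 0
  · exact mem_Gbar_of_det_eq_one_of_ne_zero hdet hc
  set F := swapGL L * transvGL 1 * swapGL L
  have hF : F ∈ Gbar L :=
    mul_mem (mul_mem swapGL_mem_Gbar (transvGL_mem_Gbar 1)) swapGL_mem_Gbar
  have hd : (A : Matrix (Fin 2) (Fin 2) L) 1 1 ≠ 0 := by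
    intro hd
    simp [Matrix.det_fin_two, hc, hd] at hdet
  have hAF : A * F ∈ Gbar L := by
    apply mem_Gbar_of_det_eq_one_of_ne_zero
    · simp [F, Matrix.det_mul, hdet, det_swapGL, det_transvGL]
    · rw [Units.val_mul, coe_swapGL_mul_transvGL_one_mul_swapGL]
      simpa [Matrix.mul_apply, hc] using hd
  simpa using mul_mem hAF (inv_mem hF)

theorem Gbar_le_SL2_of_ringChar_eq_two (h : ringChar L = 2) : Gbar L ≤ SL2 L := by
  have : CharP L 2 := ringChar.eq_iff.mp h
  rw [Gbar, Subgroup.closure_le]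
  rintro A (rfl | ⟨b, -, rfl⟩)
  · simp [mem_SL2, det_swapGL, CharTwo.neg_eq]
  · exact det_transvGL b

end

theorem SL2_le_Gbar_general (L : Type*) [Field L] :
    SL2 L ≤ Gbar L ∧ (ringChar L = 2 → Gbar L = SL2 L) := by
  have hle : SL2 L ≤ Gbar L := fun _ hA => mem_Gbar_of_det_eq_one hA
  exact ⟨hle, fun h => le_antisymm (Gbar_le_SL2_of_ringChar_eq_two h) hle⟩

/-- For a finite field `L`, the special linear group `SL(2, L)` is a
subgroup of `Ḡ`; moreover, if `char(L) = 2` then `Ḡ = SL(2, L)`. -/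
theorem SL2_le_Gbar (L : Type*) [Field L] [Fintype L] :
    SL2 L ≤ Gbar L ∧ (ringChar L = 2 → Gbar L = SL2 L) :=
  SL2_le_Gbar_general L
end

section
/- Let F be a finite field with |F| = Q and char(F) = 2, let M ∈ GL(2, F) have irreducible characteristic polynomial over F and multiplicative order Q² − 1, and set H̄ = ⟨M^{Q−1}⟩. Then H̄ acts regularly on the set of all 1-dimensional subspaces of F²: for any two lines l, l′ of F² there is exactly one A ∈ H̄ with l·A = l′; in particular the action is transitive and all stabilizers are trivial. -/
/-!
Lines of `F²` are the points of the projective line `ℙ¹(F)`, of which there are `Q + 1`,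
and `H̄ = ⟨M^{Q-1}⟩` has order `Q + 1`; so regularity reduces to freeness. Let `A ∈ H̄` fix
the line spanned by `v`, say `A v = c v`. Since `M` has no eigenvector, `v` and `M v` span
`F²`, and `A`, commuting with `M`, acts as `c` on both: `A = c`. Now `c^{Q+1} = 1` because
`A^{Q+1} = 1`, and `c^{Q-1} = 1` because `c ∈ Fˣ`; as `Q` is even, `Q - 1` and `Q + 1` are
coprime, so `c = 1`.
-/

open Module

open Projectivization
open scoped LinearAlgebra.Projectivization Matrix

theorem Nat.coprime_sub_one_add_one_of_even {n : ℕ} (hn : Even n) :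
    Nat.Coprime (n - 1) (n + 1) := by
  rcases Nat.eq_zero_or_pos n with rfl | hpos
  · simp
  rw [show n + 1 = 2 + (n - 1) by omega, Nat.coprime_add_self_right, Nat.coprime_two_right]
  exact Nat.Even.sub_odd hpos hn odd_one

theorem FiniteField.eq_one_of_pow_card_add_one_eq_one {F : Type*} [Field F] [Fintype F]
    (hcop : Nat.Coprime (Fintype.card F - 1) (Fintype.card F + 1)) {a : F}
    (ha : a ^ (Fintype.card F + 1) = 1) : a = 1 := by
  have ha0 : a ≠ 0 := by rintro rfl; simp at ha
  simpa [hcop.gcd_eq_one] using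
    pow_gcd_eq_one.2 ⟨FiniteField.pow_card_sub_one_eq_one a ha0, ha⟩

theorem MulAction.existsUnique_smul_eq_of_free {G X : Type*} [Group G] [MulAction G X] [Finite X]
    {H : Subgroup G} (hcard : Nat.card H = Nat.card X)
    (hfree : ∀ g ∈ H, ∀ x : X, g • x = x → g = 1) (x y : X) :
    ∃! g : G, g ∈ H ∧ g • x = y := by
  have hinj : Function.Injective fun g : H => (g : G) • x := by
    intro g h hgh
    have hfix : ((h : G)⁻¹ * g) • x = x := by
      rw [mul_smul, inv_smul_eq_iff]
      exact hgh
    exact Subtype.ext (inv_mul_eq_one.1 (hfree _ (H.mul_mem (H.inv_mem h.2) g.2) x hfix)).symm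
  obtain ⟨g, hg⟩ := ((Nat.bijective_iff_injective_and_card _).2 ⟨hinj, hcard⟩).2 y
  exact ⟨g, ⟨g.2, hg⟩, fun h ⟨hH, hh⟩ =>
    congrArg Subtype.val (hinj (a₁ := ⟨h, hH⟩) (hh.trans hg.symm))⟩

namespace Matrix

variable {K : Type*} [Field K]

theorem mulVec_ne_smul_of_irreducible_charpoly {n : Type*} [Fintype n] [DecidableEq n]
    {M : Matrix n n K} (hirr : Irreducible M.charpoly) (hn : Fintype.card n ≠ 1)
    {v : n → K} (hv : v ≠ 0) (c : K) : M *ᵥ v ≠ c • v := by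
  intro hMv
  have hroot : M.charpoly.IsRoot c := by
    rw [← charpoly_toLin', ← Module.End.hasEigenvalue_iff_isRoot_charpoly]
    exact Module.End.hasEigenvalue_of_hasEigenvector
      ⟨Module.End.mem_eigenspace_iff.2 (by rwa [toLin'_apply]), hv⟩
  have hdeg := Polynomial.degree_eq_one_of_irreducible_of_root hirr hroot
  rw [charpoly_degree_eq_dim] at hdeg
  exact hn (by exact_mod_cast hdeg)

theorem span_pair_mulVec_eq_top {M : Matrix (Fin 2) (Fin 2) K} (hirr : Irreducible M.charpoly)
    {v : Fin 2 → K} (hv : v ≠ 0) : Submodule.span K (Set.range ![v, M *ᵥ v]) = ⊤ :=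
  ((LinearIndependent.pair_iff' hv).2 fun c =>
    (mulVec_ne_smul_of_irreducible_charpoly hirr (by simp) hv c).symm
    ).span_eq_top_of_card_eq_finrank (by simp)

theorem eq_smul_one_of_commute_of_mulVec_eq_smul {M A : Matrix (Fin 2) (Fin 2) K}
    (hirr : Irreducible M.charpoly) (hAM : Commute A M) {v : Fin 2 → K} (hv : v ≠ 0) {c : K}
    (hAv : A *ᵥ v = c • v) : A = c • 1 := by
  have hv0 : (A - c • 1) *ᵥ v = 0 := by
    rw [sub_mulVec, smul_mulVec, one_mulVec, hAv, sub_self]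
  have hMv0 : (A - c • 1) *ᵥ (M *ᵥ v) = 0 := by
    rw [mulVec_mulVec, (hAM.sub_left ((Commute.one_left M).smul_left c)).eq, ← mulVec_mulVec,
      hv0, mulVec_zero]
  rw [← sub_eq_zero, ← toLin'.map_eq_zero_iff]
  refine LinearMap.ext_on (span_pair_mulVec_eq_top hirr hv) ?_
  rintro _ ⟨i, rfl⟩
  fin_cases i
  exacts [hv0, hMv0]

end Matrix

namespace Projectivization

variable {F : Type*} [Field F]

theorem submodule_smul_eq_mapGL {n : ℕ} (A : GL (Fin n) F) (p : ℙ F (Fin n → F)) :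
    (A • p).submodule = mapGL A p.submodule := by
  induction p using Projectivization.ind with
  | h v hv =>
    rw [smul_mk, submodule_mk, submodule_mk, mapGL, Submodule.map_span, Set.image_singleton,
      Matrix.toLin'_apply, Units.smul_def, Matrix.smul_eq_mulVec]

theorem mapGL_eq_iff_smul_mk''_eq {n : ℕ} (A : GL (Fin n) F) {l l' : Submodule F (Fin n → F)}
    (hl : finrank F l = 1) (hl' : finrank F l' = 1) :
    mapGL A l = l' ↔ A • mk'' l hl = mk'' l' hl' := by
  rw [← submodule_injective.eq_iff, submodule_smul_eq_mapGL, submodule_mk'', submodule_mk'']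

theorem eq_one_of_commute_of_smul_eq_self [Fintype F]
    (hcop : Nat.Coprime (Fintype.card F - 1) (Fintype.card F + 1)) {M A : GL (Fin 2) F}
    (hirr : Irreducible (M : Matrix (Fin 2) (Fin 2) F).charpoly) (hAM : Commute A M)
    (hA : A ^ (Fintype.card F + 1) = 1) {p : ℙ F (Fin 2 → F)} (hp : A • p = p) : A = 1 := by
  induction p using Projectivization.ind with
  | h v hv =>
    rw [smul_mk, mk_eq_mk_iff'] at hp
    obtain ⟨c, hc⟩ := hp
    have hAc : (A : Matrix (Fin 2) (Fin 2) F) = c • 1 :=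
      Matrix.eq_smul_one_of_commute_of_mulVec_eq_smul hirr hAM.units_val hv
        (by rw [← Matrix.smul_eq_mulVec, ← Units.smul_def, hc])
    have hc1 : c ^ (Fintype.card F + 1) = 1 := by
      simpa [Units.val_pow_eq_pow_val, hAc, smul_pow] using
        congrArg (fun B : GL (Fin 2) F => (B : Matrix (Fin 2) (Fin 2) F) 0 0) hA
    ext : 1
    rw [hAc, FiniteField.eq_one_of_pow_card_add_one_eq_one hcop hc1, one_smul, Units.val_one]

end Projectivization

/-- Let `F` be a finite field with `|F| = Q` of characteristic `2`,
`M ∈ GL(2, F)` a Singer cycle (irreducible characteristic polynomial and order `Q² − 1`),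
and `H̄ = ⟨M^{Q−1}⟩`. Then `H̄` acts regularly on the lines of `F²`: for any lines `l, l′`
there is exactly one `A ∈ H̄` with `l·A = l′`. -/
theorem singer_subgroup_regular_on_lines_char_two
    {F : Type*} [Field F] [Fintype F] (hchar : ringChar F = 2)
    (M : GL (Fin 2) F)
    (hirr : Irreducible (Matrix.charpoly (M : Matrix (Fin 2) (Fin 2) F)))
    (hord : orderOf M = Fintype.card F ^ 2 - 1) :
    ∀ l l' : Submodule F (Fin 2 → F), finrank F l = 1 → finrank F l' = 1 →
      ∃! A : GL (Fin 2) F,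
        A ∈ Subgroup.zpowers (M ^ (Fintype.card F - 1)) ∧ mapGL A l = l' := by
  intro l l' hl hl'
  set Q := Fintype.card F
  have hQ : 1 < Q := Fintype.one_lt_card
  have hcop : Nat.Coprime (Q - 1) (Q + 1) :=
    Nat.coprime_sub_one_add_one_of_even <|
      Nat.even_iff.2 (FiniteField.even_card_of_char_two hchar)
  have hN : orderOf (M ^ (Q - 1)) = Q + 1 := by
    have hM : orderOf M = (Q - 1) * (Q + 1) := by
      rw [hord, ← one_pow 2, Nat.sq_sub_sq, mul_comm, one_pow]
    rw [orderOf_pow_of_dvd (by omega) (hM ▸ dvd_mul_right _ _), hM,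
      Nat.mul_div_cancel_left _ (by omega)]
  have hfree : ∀ A ∈ Subgroup.zpowers (M ^ (Q - 1)), ∀ p : ℙ F (Fin 2 → F),
      A • p = p → A = 1 := by
    intro A hA p hp
    obtain ⟨k, rfl⟩ := Subgroup.mem_zpowers_iff.1 hA
    exact eq_one_of_commute_of_smul_eq_self hcop hirr
      (((Commute.refl M).pow_left _).zpow_left k)
      (orderOf_dvd_iff_pow_eq_one.1 (hN ▸ orderOf_dvd_of_mem_zpowers hA)) hp
  have hcard : Nat.card (Subgroup.zpowers (M ^ (Q - 1))) = Nat.card (ℙ F (Fin 2 → F)) := by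
    rw [Nat.card_zpowers, hN, card_of_finrank_two F _ (by simp), Nat.card_eq_fintype_card]
  simpa only [mapGL_eq_iff_smul_mk''_eq _ hl hl'] using
    MulAction.existsUnique_smul_eq_of_free hcard hfree (mk'' l hl) (mk'' l' hl')
end
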